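/- arXiv:1906.01404 — 2 statements merged into one kernel-verified Lean document; each statement's English description precedes it below -/
import Mathlib

section
/- Let (B_N)_{N≥1} be a sequence of random variables where B_N is binomially distributed with parameters N and p_N, and suppose there exist c, ε > 0 with N p_N ≥ c N^{ε} for all N. Then B_N / (N p_N) → 1 almost surely, and in particular B_N → ∞ almost surely. -/
/-!
Write `M = N p_N`. Chernoff's bound for the binomial law gives
`P(|B_N - M| ≥ δ M) ≤ 2 exp(-δ² M / 4) ≤ 2 exp(-(δ² c / 4) N^ε)`, which is summable in `N`
because it decays faster than `N^{-2}`. By Borel–Cantelli, almost surely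
`|B_N / M - 1| < δ` eventually, simultaneously for the countably many `δ = 1/(j+1)`, so
`B_N / M → 1`; since `M ≥ c N^ε → ∞`, also `B_N → ∞`.
-/

open MeasureTheory Filter Finset Real Topology

noncomputable def binomialWeight (n : ℕ) (q : ℝ) (m : ℕ) : ℝ :=
  (n.choose m : ℝ) * q ^ m * (1 - q) ^ (n - m)

theorem binomialWeight_nonneg {q : ℝ} (hq0 : 0 ≤ q) (hq1 : q ≤ 1) (n m : ℕ) :
    0 ≤ binomialWeight n q m := by
  have : 0 ≤ 1 - q := by linarith
  unfold binomialWeight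
  positivity

theorem sum_pow_mul_binomialWeight (n : ℕ) (q x : ℝ) :
    ∑ m ∈ range (n + 1), x ^ m * binomialWeight n q m = (x * q + (1 - q)) ^ n := by
  rw [add_pow]
  exact sum_congr rfl fun m _ => by unfold binomialWeight; ring

theorem mul_add_one_sub_pow_le_exp (n : ℕ) {q x : ℝ} (hq0 : 0 ≤ q) (hq1 : q ≤ 1) (hx : 0 ≤ x) :
    (x * q + (1 - q)) ^ n ≤ exp (n * (q * (x - 1))) := by
  rw [exp_nat_mul]
  refine pow_le_pow_left₀ (by nlinarith) ?_ n
  linarith [add_one_le_exp (q * (x - 1))]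

section BinomialLaw

variable {Ω : Type*} [MeasurableSpace Ω] {μ : Measure Ω} {X : Ω → ℕ} {n : ℕ} {q : ℝ}

theorem measure_preimage_le_sum_mul_binomialWeight (hX : Measurable X) (hq0 : 0 ≤ q) (hq1 : q ≤ 1)
    (hlaw : ∀ m : ℕ, μ {ω | X ω = m} = ENNReal.ofReal (binomialWeight n q m))
    {S : Set ℕ} {f : ℕ → ℝ} (hf0 : ∀ m, 0 ≤ f m) (hfS : ∀ m ∈ S, 1 ≤ f m) :
    μ (X ⁻¹' S) ≤ ENNReal.ofReal (∑ m ∈ range (n + 1), f m * binomialWeight n q m) := by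
  have hw := binomialWeight_nonneg hq0 hq1 n
  rw [ENNReal.ofReal_sum_of_nonneg fun m _ => mul_nonneg (hf0 m) (hw m),
    ← tsum_measure_preimage_singleton S.to_countable fun m _ => hX (measurableSet_singleton m)]
  calc ∑' m : S, μ (X ⁻¹' {(m : ℕ)})
      = ∑' m, S.indicator (fun m => ENNReal.ofReal (binomialWeight n q m)) m := by
        rw [← _root_.tsum_subtype]; exact tsum_congr fun m => hlaw m
    _ ≤ ∑' m, ENNReal.ofReal (f m * binomialWeight n q m) := by
        refine ENNReal.tsum_le_tsum fun m => ?_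
        by_cases hm : m ∈ S
        · rw [Set.indicator_of_mem hm]
          exact ENNReal.ofReal_le_ofReal (le_mul_of_one_le_left (hw m) (hfS m hm))
        · rw [Set.indicator_of_notMem hm]
          exact zero_le
    _ = ∑ m ∈ range (n + 1), ENNReal.ofReal (f m * binomialWeight n q m) := by
        refine tsum_eq_sum fun m hm => ?_
        rw [binomialWeight, Nat.choose_eq_zero_of_lt (by simpa using hm)]
        simp

/-- Chernoff: Markov's inequality for `exp (s X)`, whose mean `(eˢ q + 1 - q)ⁿ` is at most
`exp (n q (eˢ - 1))`. -/
theorem measure_mul_le_mul_le_exp_of_binomial (hX : Measurable X) (hq0 : 0 ≤ q) (hq1 : q ≤ 1)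
    (hlaw : ∀ m : ℕ, μ {ω | X ω = m} = ENNReal.ofReal (binomialWeight n q m)) (s a : ℝ) :
    μ {ω | s * a ≤ s * X ω} ≤ ENNReal.ofReal (exp (n * q * (exp s - 1) - s * a)) := by
  refine (measure_preimage_le_sum_mul_binomialWeight (S := {m : ℕ | s * a ≤ s * m}) hX hq0 hq1
    hlaw (f := fun m => exp (s * m - s * a)) (fun m => (exp_pos _).le)
    fun m hm => one_le_exp (sub_nonneg.2 hm)).trans (ENNReal.ofReal_le_ofReal ?_)
  calc ∑ m ∈ range (n + 1), exp (s * m - s * a) * binomialWeight n q m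
      = exp (-(s * a)) * ∑ m ∈ range (n + 1), exp s ^ m * binomialWeight n q m := by
        rw [mul_sum]
        refine sum_congr rfl fun m _ => ?_
        rw [← exp_nat_mul, ← mul_assoc, ← exp_add]
        ring_nf
    _ ≤ exp (-(s * a)) * exp (n * (q * (exp s - 1))) := by
        rw [sum_pow_mul_binomialWeight]
        exact mul_le_mul_of_nonneg_left (mul_add_one_sub_pow_le_exp n hq0 hq1 (exp_pos s).le)
          (exp_pos _).le
    _ = exp (n * q * (exp s - 1) - s * a) := by
        rw [← exp_add]
        ring_nf

theorem measure_le_abs_sub_le_exp_of_binomial (hX : Measurable X) (hq0 : 0 ≤ q) (hq1 : q ≤ 1)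
    (hlaw : ∀ m : ℕ, μ {ω | X ω = m} = ENNReal.ofReal (binomialWeight n q m))
    {δ : ℝ} (hδ0 : 0 < δ) (hδ2 : δ ≤ 2) :
    μ {ω | δ * (n * q) ≤ |(X ω : ℝ) - n * q|} ≤
      ENNReal.ofReal (2 * exp (-(δ ^ 2 / 4 * (n * q)))) := by
  set M : ℝ := n * q
  have hM : 0 ≤ M := by positivity
  -- `eˢ ≤ 1 + s + s²` for `|s| ≤ 1` turns each one-sided Chernoff bound, at `s = ± δ / 2`,
  -- into `exp (-δ² M / 4)`.
  have tail (s a : ℝ) (hs : |s| ≤ 1) (ha : M * (s + s ^ 2) - s * a ≤ -(δ ^ 2 / 4 * M)) :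
      μ {ω | s * a ≤ s * X ω} ≤ ENNReal.ofReal (exp (-(δ ^ 2 / 4 * M))) := by
    refine (measure_mul_le_mul_le_exp_of_binomial hX hq0 hq1 hlaw s a).trans
      (ENNReal.ofReal_le_ofReal (exp_le_exp.2 ?_))
    have := (abs_le.1 (abs_exp_sub_one_sub_id_le hs)).2
    nlinarith
  have hδ : |δ / 2| ≤ 1 := by rw [abs_of_pos (by positivity)]; linarith
  have hupper := tail (δ / 2) ((1 + δ) * M) hδ (by nlinarith)
  have hlower := tail (-(δ / 2)) ((1 - δ) * M) (by rwa [abs_neg]) (by nlinarith)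
  calc μ {ω | δ * M ≤ |(X ω : ℝ) - M|}
      ≤ μ ({ω | δ / 2 * ((1 + δ) * M) ≤ δ / 2 * X ω} ∪
          {ω | -(δ / 2) * ((1 - δ) * M) ≤ -(δ / 2) * X ω}) := by
        refine measure_mono fun ω hω => ?_
        simp only [Set.mem_ofPred_eq, Set.mem_union] at hω ⊢
        rcases le_abs'.1 hω with h | h
        · right; nlinarith
        · left; nlinarith
    _ ≤ ENNReal.ofReal (exp (-(δ ^ 2 / 4 * M))) + ENNReal.ofReal (exp (-(δ ^ 2 / 4 * M))) :=
        (measure_union_le _ _).trans (add_le_add hupper hlower)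
    _ = ENNReal.ofReal (2 * exp (-(δ ^ 2 / 4 * M))) := by
        rw [← ENNReal.ofReal_add (exp_pos _).le (exp_pos _).le, two_mul]

end BinomialLaw

theorem summable_exp_neg_mul_rpow {a ε : ℝ} (ha : 0 < a) (hε : 0 < ε) :
    Summable fun N : ℕ => exp (-a * (N : ℝ) ^ ε) := by
  have hpow : Tendsto (fun N : ℕ => (N : ℝ) ^ ε) atTop atTop :=
    (tendsto_rpow_atTop hε).comp tendsto_natCast_atTop_atTop
  -- `e^{-a x} = o(x^{-2/ε})` at `x = N^ε` gives `e^{-a N^ε} = o(N^{-2})`.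
  have hlittle := (isLittleO_exp_neg_mul_rpow_atTop ha (-2 / ε)).comp_tendsto hpow
  refine summable_of_isBigO_nat (Real.summable_nat_rpow.2 (by norm_num : (-2 : ℝ) < -1))
    (hlittle.isBigO.congr_right fun N => ?_)
  rw [Function.comp_apply, ← rpow_mul (Nat.cast_nonneg N), mul_div_cancel₀ _ hε.ne']

theorem ae_eventually_notMem_of_summable {α : Type*} [MeasurableSpace α] {μ : Measure α}
    [IsFiniteMeasure μ] {s : ℕ → Set α} {f : ℕ → ℝ} (hf : Summable f)
    (hs : ∀ᶠ N in atTop, μ (s N) ≤ ENNReal.ofReal (f N)) :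
    ∀ᵐ x ∂μ, ∀ᶠ N in atTop, x ∉ s N := by
  have hreal : Summable fun N => μ.real (s N) :=
    hf.abs.of_norm_bounded_eventually_nat <| hs.mono fun N hN => by
      rw [Real.norm_of_nonneg measureReal_nonneg]
      exact ENNReal.toReal_le_of_le_ofReal (abs_nonneg _)
        (hN.trans (ENNReal.ofReal_le_ofReal (le_abs_self _)))
  refine ae_eventually_notMem ?_
  rw [tsum_congr fun N => (ofReal_measureReal (s := s N)).symm,
    ← ENNReal.ofReal_tsum_of_nonneg (fun _ => measureReal_nonneg) hreal]
  exact ENNReal.ofReal_ne_top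

theorem tendsto_div_nhds_one_of_abs_sub_lt {x M : ℕ → ℝ}
    (h : ∀ δ > 0, ∀ᶠ N in atTop, |x N - M N| < δ * M N) :
    Tendsto (fun N => x N / M N) atTop (𝓝 1) := by
  refine Metric.tendsto_nhds.2 fun δ hδ => (h δ hδ).mono fun N hN => ?_
  have hM : 0 < M N := pos_of_mul_pos_right ((abs_nonneg _).trans_lt hN) hδ.le
  rwa [Real.dist_eq, div_sub_one hM.ne', abs_div, abs_of_pos hM, div_lt_iff₀ hM]

theorem ae_tendsto_div_nhds_one {Ω : Type*} [MeasurableSpace Ω] {μ : Measure Ω}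
    {Y : ℕ → Ω → ℝ} {M : ℕ → ℝ}
    (h : ∀ δ : ℝ, 0 < δ → δ ≤ 1 → ∀ᵐ ω ∂μ, ∀ᶠ N in atTop, |Y N ω - M N| < δ * M N) :
    ∀ᵐ ω ∂μ, Tendsto (fun N => Y N ω / M N) atTop (𝓝 1) := by
  have hall : ∀ᵐ ω ∂μ, ∀ j : ℕ, ∀ᶠ N in atTop, |Y N ω - M N| < 1 / (j + 1) * M N :=
    ae_all_iff.2 fun j => h _ (by positivity) (div_le_one_of_le₀ (by simp) (by positivity))
  filter_upwards [hall] with ω hω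
  refine tendsto_div_nhds_one_of_abs_sub_lt fun δ hδ => ?_
  obtain ⟨j, hj⟩ := exists_nat_one_div_lt hδ
  refine (hω j).mono fun N hN => hN.trans_le ?_
  have hM : 0 ≤ M N := nonneg_of_mul_nonneg_right ((abs_nonneg _).trans hN.le) (by positivity)
  exact mul_le_mul_of_nonneg_right hj.le hM

theorem tendsto_atTop_of_tendsto_div_nhds_one {x M : ℕ → ℝ}
    (hdiv : Tendsto (fun N => x N / M N) atTop (𝓝 1)) (hM : Tendsto M atTop atTop) :
    Tendsto x atTop atTop := by
  refine (hdiv.pos_mul_atTop one_pos hM).congr' ?_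
  filter_upwards [hM.eventually_gt_atTop 0] with N hN
  exact div_mul_cancel₀ _ hN.ne'

/-- If `B_N` is Binomial(`N`, `p_N`) with `N p_N ≥ c N^ε`, then `B_N/(N p_N) → 1`
almost surely, and in particular `B_N → ∞` almost surely. -/
theorem stmt_12 {Ω : Type*} [MeasurableSpace Ω] (μ : Measure Ω) [IsProbabilityMeasure μ]
    (B : ℕ → Ω → ℕ) (hmeas : ∀ N, Measurable (B N))
    (p : ℕ → ℝ) (hp0 : ∀ N, 0 ≤ p N) (hp1 : ∀ N, p N ≤ 1)
    (hlaw : ∀ N, 1 ≤ N → ∀ m : ℕ,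
      μ {ω | B N ω = m} = ENNReal.ofReal ((N.choose m : ℝ) * p N ^ m * (1 - p N) ^ (N - m)))
    (c ε : ℝ) (hc : 0 < c) (hε : 0 < ε)
    (hgrow : ∀ N : ℕ, 1 ≤ N → (N : ℝ) * p N ≥ c * (N : ℝ) ^ ε) :
    ∀ᵐ ω ∂μ,
      Tendsto (fun N => (B N ω : ℝ) / ((N : ℝ) * p N)) atTop (nhds 1) ∧
      Tendsto (fun N => B N ω) atTop atTop := by
  have hconc (δ : ℝ) (hδ0 : 0 < δ) (hδ1 : δ ≤ 1) :
      ∀ᵐ ω ∂μ, ∀ᶠ N in atTop, |(B N ω : ℝ) - N * p N| < δ * (N * p N) := by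
    have hsum := (summable_exp_neg_mul_rpow (a := δ ^ 2 / 4 * c) (by positivity) hε).mul_left 2
    refine (ae_eventually_notMem_of_summable
      (s := fun N => {ω | δ * (N * p N) ≤ |(B N ω : ℝ) - N * p N|}) hsum ?_).mono
      fun ω hω => hω.mono fun N hN => not_le.1 hN
    filter_upwards [eventually_ge_atTop 1] with N hN
    refine (measure_le_abs_sub_le_exp_of_binomial (hmeas N) (hp0 N) (hp1 N) (hlaw N hN) hδ0
      (by linarith)).trans (ENNReal.ofReal_le_ofReal ?_)
    gcongr 2 * exp ?_
    nlinarith [hgrow N hN]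
  have hmean : Tendsto (fun N : ℕ => (N : ℝ) * p N) atTop atTop :=
    tendsto_atTop_mono' atTop (eventually_atTop.2 ⟨1, fun N hN => hgrow N hN⟩)
      (((tendsto_rpow_atTop hε).comp tendsto_natCast_atTop_atTop).const_mul_atTop hc)
  filter_upwards [ae_tendsto_div_nhds_one hconc] with ω hω
  exact ⟨hω, tendsto_natCast_atTop_iff.1 (tendsto_atTop_of_tendsto_div_nhds_one hω hmean)⟩
end

section
/- Adding a training point to a Gaussian process does not increase the posterior variance at any test point: for a positive semidefinite kernel k, noise variance σ_n² > 0, and training inputs x^{(1)},…,x^{(N+1)}, the posterior variance σ_{N+1}²(x) computed with all N+1 points satisfies σ_{N+1}²(x) ≤ σ_N²(x), where σ_N²(x) is computed using only the first N points. -/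
/-!
For positive definite `A`, `⟪v, A⁻¹ v⟫` is the maximum over `w` of `2 ⟪w, v⟫ - ⟪w, A w⟫`
(complete the square at `w = A⁻¹ v`). The maximiser for the kernel matrix of the first `N`
inputs, padded with a zero, is an admissible `w` for the kernel matrix of all `N + 1` inputs,
so the subtracted quadratic form can only grow when a training point is added.
-/

open Matrix

namespace Matrix

variable {m n : Type*} [Fintype m] [Fintype n] [DecidableEq m] [DecidableEq n]

theorem PosDef.two_mul_dotProduct_sub_le_dotProduct_inv_mulVec {A : Matrix n n ℝ}
    (hA : A.PosDef) (v w : n → ℝ) :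
    2 * (w ⬝ᵥ v) - w ⬝ᵥ A *ᵥ w ≤ v ⬝ᵥ A⁻¹ *ᵥ v := by
  set u := A⁻¹ *ᵥ v
  have hAu : A *ᵥ u = v := by
    rw [mulVec_mulVec, mul_nonsing_inv _ (isUnit_iff_ne_zero.mpr hA.det_pos.ne'), one_mulVec]
  have huA : u ᵥ* A = v := by
    rw [← mulVec_transpose, (isHermitian_iff_isSymm.mp hA.isHermitian).eq, hAu]
  have hnonneg : 0 ≤ (w - u) ⬝ᵥ A *ᵥ (w - u) := by
    simpa using hA.posSemidef.dotProduct_mulVec_nonneg (w - u)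
  have hexpand : (w - u) ⬝ᵥ A *ᵥ (w - u) = w ⬝ᵥ A *ᵥ w - 2 * (w ⬝ᵥ v) + v ⬝ᵥ u := by
    rw [mulVec_sub, sub_dotProduct, dotProduct_sub, dotProduct_sub, hAu, dotProduct_mulVec u, huA,
      dotProduct_comm u v, dotProduct_comm v w]
    ring
  linarith

theorem PosDef.dotProduct_inv_mulVec_transpose_mul_mul_same_le {A : Matrix n n ℝ} (hA : A.PosDef)
    {P : Matrix n m ℝ} (hB : IsUnit (Pᵀ * A * P).det) (v : n → ℝ) :
    (Pᵀ *ᵥ v) ⬝ᵥ (Pᵀ * A * P)⁻¹ *ᵥ (Pᵀ *ᵥ v) ≤ v ⬝ᵥ A⁻¹ *ᵥ v := by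
  set c := (Pᵀ * A * P)⁻¹ *ᵥ (Pᵀ *ᵥ v)
  have hBc : (Pᵀ * A * P) *ᵥ c = Pᵀ *ᵥ v := by
    rw [mulVec_mulVec, mul_nonsing_inv _ hB, one_mulVec]
  have hlin : (P *ᵥ c) ⬝ᵥ v = c ⬝ᵥ (Pᵀ *ᵥ v) := by
    rw [dotProduct_comm, dotProduct_mulVec, ← mulVec_transpose, dotProduct_comm]
  have hquad : (P *ᵥ c) ⬝ᵥ A *ᵥ (P *ᵥ c) = c ⬝ᵥ (Pᵀ *ᵥ v) := by
    rw [← hBc, ← mulVec_mulVec, ← mulVec_mulVec, dotProduct_mulVec c, ← mulVec_transpose,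
      transpose_transpose, mulVec_mulVec]
  have := hA.two_mul_dotProduct_sub_le_dotProduct_inv_mulVec v (P *ᵥ c)
  rw [hlin, hquad] at this
  rw [dotProduct_comm]
  linarith

theorem PosDef.dotProduct_inv_mulVec_submatrix_le {A : Matrix n n ℝ} (hA : A.PosDef)
    {f : m → n} (hf : Function.Injective f) (v : n → ℝ) :
    (v ∘ f) ⬝ᵥ (A.submatrix f f)⁻¹ *ᵥ (v ∘ f) ≤ v ⬝ᵥ A⁻¹ *ᵥ v := by
  set P : Matrix n m ℝ := (1 : Matrix n n ℝ).submatrix id f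
  have hconj : Pᵀ * A * P = A.submatrix f f := by
    ext i j; simp [P, mul_apply, one_apply]
  have hPv : Pᵀ *ᵥ v = v ∘ f := by
    ext i; simp [P, mulVec, dotProduct, one_apply]
  have hB : IsUnit (Pᵀ * A * P).det := by
    rw [hconj]; exact isUnit_iff_ne_zero.mpr (hA.submatrix hf).det_pos.ne'
  simpa [hconj, hPv] using hA.dotProduct_inv_mulVec_transpose_mul_mul_same_le hB v

end Matrix

theorem stmt_16_general {α : Type*} (k : α → α → ℝ)
    (hpsd : ∀ (n : ℕ) (z : Fin n → α),
      (Matrix.of fun i j : Fin n => k (z i) (z j)).PosSemidef)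
    (σn2 : ℝ) (hσ : 0 < σn2) (N : ℕ) (x : Fin (N + 1) → α) (t : α) :
    k t t - (fun i : Fin (N + 1) => k t (x i)) ⬝ᵥ
        ((Matrix.of fun i j : Fin (N + 1) => k (x i) (x j))
            + σn2 • (1 : Matrix (Fin (N + 1)) (Fin (N + 1)) ℝ))⁻¹.mulVec
          (fun i : Fin (N + 1) => k t (x i))
      ≤ k t t - (fun i : Fin N => k t (x i.castSucc)) ⬝ᵥ
          ((Matrix.of fun i j : Fin N => k (x i.castSucc) (x j.castSucc))
              + σn2 • (1 : Matrix (Fin N) (Fin N) ℝ))⁻¹.mulVec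
            (fun i : Fin N => k t (x i.castSucc)) := by
  have hA : ((Matrix.of fun i j : Fin (N + 1) => k (x i) (x j))
      + σn2 • (1 : Matrix (Fin (N + 1)) (Fin (N + 1)) ℝ)).PosDef :=
    PosDef.posSemidef_add (hpsd _ x) (PosDef.one.smul hσ)
  have hsub := hA.dotProduct_inv_mulVec_submatrix_le (Fin.castSucc_injective N)
    fun i => k t (x i)
  have hrestrict : ((Matrix.of fun i j : Fin (N + 1) => k (x i) (x j))
      + σn2 • (1 : Matrix (Fin (N + 1)) (Fin (N + 1)) ℝ)).submatrix Fin.castSucc Fin.castSucc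
      = (Matrix.of fun i j : Fin N => k (x i.castSucc) (x j.castSucc))
          + σn2 • (1 : Matrix (Fin N) (Fin N) ℝ) := by
    ext i j; simp [one_apply]
  rw [hrestrict] at hsub
  exact sub_le_sub_left hsub _

/-- Adding a training point never increases the Gaussian process posterior variance:
with a symmetric positive semidefinite kernel `k` and noise variance `σn2 > 0`, the
posterior variance using all `N+1` training inputs is at most the one using the
first `N` inputs. -/
theorem stmt_16 {α : Type*} (k : α → α → ℝ) (hsym : ∀ a b, k a b = k b a)
    (hpsd : ∀ (n : ℕ) (z : Fin n → α),
      (Matrix.of fun i j : Fin n => k (z i) (z j)).PosSemidef)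
    (σn2 : ℝ) (hσ : 0 < σn2) (N : ℕ) (x : Fin (N + 1) → α) (t : α) :
    k t t - (fun i : Fin (N + 1) => k t (x i)) ⬝ᵥ
        ((Matrix.of fun i j : Fin (N + 1) => k (x i) (x j))
            + σn2 • (1 : Matrix (Fin (N + 1)) (Fin (N + 1)) ℝ))⁻¹.mulVec
          (fun i : Fin (N + 1) => k t (x i))
      ≤ k t t - (fun i : Fin N => k t (x i.castSucc)) ⬝ᵥ
          ((Matrix.of fun i j : Fin N => k (x i.castSucc) (x j.castSucc))
              + σn2 • (1 : Matrix (Fin N) (Fin N) ℝ))⁻¹.mulVec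
            (fun i : Fin N => k t (x i.castSucc)) :=
  stmt_16_general k hpsd σn2 hσ N x t
end
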